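/- arXiv:2402.14681 — 5 statements merged into one kernel-verified Lean document; each statement's English description precedes it below -/
import Mathlib

section
/- Let A be a magma and let B₁, …, B_n be finitely many isolated subsets of A such that no B_i contains the union of all the others. Then ⋃_{i=1}^{n} B_i is not closed under the operation of A. -/
/-
Pick, for every `i`, an element `x i` of the union outside `B i`. Because each `B i` is
isolated, a product lies outside `B i` as soon as one of its factors does, so the product
of all the `x i` lies outside every `B i`. If the union were closed, that product would
lie in the union, a contradiction.
-/

def Isolated {A : Type*} (op : A → A → A) (B : Set A) : Prop :=
  (∀ a b : A, a ∈ B → b ∈ B → op a b ∈ B) ∧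
  (∀ a b : A, (a ∉ B ∨ b ∉ B) → op a b ∉ B)

section Isolated

variable {A ι : Type*} {op : A → A → A} {B : ι → Set A} {S : Set A}

theorem exists_mem_forall_notMem_of_isolated (hB : ∀ i, Isolated op (B i))
    (hS : ∀ a ∈ S, ∀ b ∈ S, op a b ∈ S) (hx : ∀ i, ∃ x ∈ S, x ∉ B i)
    {s : Finset ι} (hs : s.Nonempty) : ∃ y ∈ S, ∀ i ∈ s, y ∉ B i := by
  induction hs using Finset.Nonempty.cons_induction with
  | singleton i =>
    obtain ⟨x, hxS, hxB⟩ := hx i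
    exact ⟨x, hxS, by simpa using hxB⟩
  | cons i s _ _ ih =>
    obtain ⟨x, hxS, hxB⟩ := hx i
    obtain ⟨y, hyS, hyB⟩ := ih
    refine ⟨op y x, hS y hyS x hxS, ?_⟩
    simp only [Finset.mem_cons, forall_eq_or_imp]
    exact ⟨(hB i).2 y x (Or.inr hxB), fun j hj => (hB j).2 y x (Or.inl (hyB j hj))⟩

theorem Isolated.not_closed_iUnion [Finite ι] [Nonempty ι] (hB : ∀ i, Isolated op (B i))
    (hB_ne : ∀ i, ¬ (⋃ j, B j) ⊆ B i) :
    ¬ ∀ a ∈ ⋃ i, B i, ∀ b ∈ ⋃ i, B i, op a b ∈ ⋃ i, B i := by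
  have := Fintype.ofFinite ι
  intro hS
  obtain ⟨y, hyS, hyB⟩ := exists_mem_forall_notMem_of_isolated hB hS
    (fun i => Set.not_subset.mp (hB_ne i)) Finset.univ_nonempty
  obtain ⟨i, hi⟩ := Set.mem_iUnion.mp hyS
  exact hyB i (Finset.mem_univ i) hi

end Isolated

/-- the union of finitely many isolated subsets, none of which
contains the union of all the others, is not closed under the operation. -/
theorem stmt_5 {A : Type*} (op : A → A → A) (n : ℕ) (hn : 0 < n)
    (B : Fin n → Set A) (hB : ∀ i, Isolated op (B i))
    (hmax : ∀ i : Fin n, ¬ (⋃ j, ⋃ (_ : j ≠ i), B j) ⊆ B i) :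
    ¬ ∀ a ∈ ⋃ i, B i, ∀ b ∈ ⋃ i, B i, op a b ∈ ⋃ i, B i := by
  have : Nonempty (Fin n) := Fin.pos_iff_nonempty.mp hn
  refine Isolated.not_closed_iUnion hB fun i hsub => hmax i (subset_trans ?_ hsub)
  exact Set.iUnion_subset fun j => Set.iUnion_subset fun _ => Set.subset_iUnion B j
end

section
/- With the setup of a direct system over a join-semilattice I with pairwise disjoint nonempty carriers A_i and A_i⁺ = ⋃_{j ≤ i} A_j: for any finite collection i₁, …, i_n ∈ I (n ≥ 2), if A_{i₁}⁺ ∩ … ∩ A_{i_n}⁺ ≠ ∅ and I is such that every element has only finitely many elements below it, then there exists i ∈ I with A_i⁺ = A_{i₁}⁺ ∩ … ∩ A_{i_n}⁺. -/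
/-!
Since the carriers are disjoint, a point of `A_{i₁}⁺ ∩ … ∩ A_{iₙ}⁺` lies in a single `A_j`, and
this `j` lies below every `i_k`. Hence the intersection is the union of the `A_j` over the common
lower bounds `j` of the `i_k`. These lower bounds form a set closed under `⊔`, finite because it
sits below `i₁`, and nonempty because the intersection is; so it has a greatest element `i`,
and it is then exactly `Iic i`, which turns the union into `A_i⁺`.
-/

open Set Function

section LowerBounds

variable {I : Type*} [SemilatticeSup I]

lemma supClosed_lowerBounds (s : Set I) : SupClosed (lowerBounds s) :=
  fun _ ha _ hb _ hc => sup_le (ha hc) (hb hc)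

lemma SupClosed.exists_isGreatest {s : Set I} (hs : SupClosed s) (hne : s.Nonempty)
    (hfin : s.Finite) : ∃ a, IsGreatest s a :=
  ⟨hfin.toFinset.sup' (by simpa using hne) id,
    hs.finsetSup'_mem _ fun _ hi => hfin.mem_toFinset.mp hi,
    fun _ hb => Finset.le_sup' id (hfin.mem_toFinset.mpr hb)⟩

lemma exists_isGLB_of_lowerBounds_finite {s : Set I} (hne : (lowerBounds s).Nonempty)
    (hfin : (lowerBounds s).Finite) : ∃ a, IsGLB s a :=
  (supClosed_lowerBounds s).exists_isGreatest hne hfin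

end LowerBounds

lemma iInter_accumulate_eq_biUnion_lowerBounds {ι I α : Type*} [Nonempty ι] [Preorder I]
    {A : I → Set α} (hA : Pairwise (Disjoint on A)) (f : ι → I) :
    ⋂ k, accumulate A (f k) = ⋃ j ∈ lowerBounds (range f), A j := by
  ext x
  simp only [mem_iInter, mem_accumulate, mem_iUnion, exists_prop, forall_mem_range,
    mem_lowerBounds]
  constructor
  · intro hx
    obtain ⟨j, -, hxj⟩ := hx (Classical.arbitrary ι)
    refine ⟨j, fun k => ?_, hxj⟩
    obtain ⟨j', hj'k, hxj'⟩ := hx k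
    rwa [hA.eq (not_disjoint_iff.mpr ⟨x, hxj, hxj'⟩)]
  · rintro ⟨j, hj, hxj⟩ k
    exact ⟨j, hj k, hxj⟩

theorem stmt_11_general {I α : Type*} [SemilatticeSup I] (Ai : I → Set α)
    (hdisj : ∀ i j, i ≠ j → Ai i ∩ Ai j = ∅)
    (hfin : ∀ i : I, {j : I | j ≤ i}.Finite)
    (n : ℕ) (hn : 2 ≤ n) (f : Fin n → I)
    (hinter : (⋂ k : Fin n, ⋃ j, ⋃ (_ : j ≤ f k), Ai j).Nonempty) :
    ∃ i : I, (⋃ j, ⋃ (_ : j ≤ i), Ai j) = ⋂ k : Fin n, ⋃ j, ⋃ (_ : j ≤ f k), Ai j := by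
  have hA : Pairwise (Disjoint on Ai) := fun i j hij =>
    disjoint_iff_inter_eq_empty.mpr (hdisj i j hij)
  let k₀ : Fin n := ⟨0, by omega⟩
  have : Nonempty (Fin n) := ⟨k₀⟩
  have hiInter : ⋂ k, ⋃ j, ⋃ (_ : j ≤ f k), Ai j = ⋃ j ∈ lowerBounds (range f), Ai j :=
    iInter_accumulate_eq_biUnion_lowerBounds hA f
  rw [hiInter] at hinter ⊢
  have hne : (lowerBounds (range f)).Nonempty := by
    obtain ⟨j, hj, -⟩ := nonempty_biUnion.mp hinter
    exact ⟨j, hj⟩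
  have hfin' : (lowerBounds (range f)).Finite :=
    (hfin (f k₀)).subset fun _ hj => hj (mem_range_self k₀)
  obtain ⟨i, hi⟩ := exists_isGLB_of_lowerBounds_finite hne hfin'
  exact ⟨i, by rw [hi.lowerBounds_eq]; rfl⟩

/-- for pairwise disjoint nonempty carriers over a join-semilattice
in which every element has finitely many elements below it, any nonempty finite
intersection of sets `A_{i_k}⁺ = ⋃_{j ≤ i_k} A_j` (n ≥ 2) is again of the form
`A_i⁺` for some `i`. -/
theorem stmt_11 {I α : Type*} [SemilatticeSup I] (Ai : I → Set α)
    (hne : ∀ i, (Ai i).Nonempty)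
    (hdisj : ∀ i j, i ≠ j → Ai i ∩ Ai j = ∅)
    (hfin : ∀ i : I, {j : I | j ≤ i}.Finite)
    (n : ℕ) (hn : 2 ≤ n) (f : Fin n → I)
    (hinter : (⋂ k : Fin n, ⋃ j, ⋃ (_ : j ≤ f k), Ai j).Nonempty) :
    ∃ i : I, (⋃ j, ⋃ (_ : j ≤ i), Ai j) = ⋂ k : Fin n, ⋃ j, ⋃ (_ : j ≤ f k), Ai j :=
  stmt_11_general Ai hdisj hfin n hn f hinter
end

section
/- Let A be a magma, {B_i}_{i ∈ I} a frame of isolated subsets of A with complement sets B_i⁻ = B_i \ ⋃_{j < i} B_j (where i ≤ j iff B_i ⊆ B_j), and suppose i < j < k in I. If φ : B_i⁻ → B_j⁻ and ψ : B_j⁻ → B_k⁻ are Płonka homomorphisms with respect to A, then ψ ∘ φ : B_i⁻ → B_k⁻ is a Płonka homomorphism with respect to A. -/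
/-- The complement set `B_i⁻ = B_i \ ⋃_{j < i} B_j`. -/
def Bminus {I α : Type*} [Preorder I] (B : I → Set α) (i : I) : Set α :=
  B i \ ⋃ j, ⋃ (_ : j < i), B j

/-- `φ : α → α` represents a Płonka homomorphism from `B_i⁻` to `B_j⁻` with
respect to the ambient magma, already extended by the identity outside `B_i⁻`. -/
def PHom {I α : Type*} [Preorder I] (op : α → α → α) (B : I → Set α)
    (i j : I) (φ : α → α) : Prop :=
  (∀ x ∈ Bminus B i, φ x ∈ Bminus B j) ∧
  (∀ x : α, x ∉ Bminus B i → φ x = x) ∧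
  (∀ x ∈ Bminus B i, ∀ y ∈ Bminus B i, φ (op x y) = op (φ x) (φ y)) ∧
  (∀ a b : α, op a b ∈ (⋃ k, ⋃ (_ : j ≤ k), Bminus B k) →
    op a b = op (φ a) (φ b))

/-- in a frame of isolated subsets, the composition of Płonka
homomorphisms `φ : B_i⁻ → B_j⁻` and `ψ : B_j⁻ → B_k⁻` (for `i < j < k`) is a
Płonka homomorphism `B_i⁻ → B_k⁻`. -/
theorem stmt_13 {I α : Type*} [PartialOrder I] [Finite I]
    (op : α → α → α) (B : I → Set α)
    (hiso : ∀ i, Isolated op (B i))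
    (hord : ∀ i j : I, i ≤ j ↔ B i ⊆ B j)
    (hjoin : ∀ i j : I, ∃ k : I, B i ⊆ B k ∧ B j ⊆ B k ∧
      ∀ l : I, B i ⊆ B l → B j ⊆ B l → B k ⊆ B l)
    (htop : ∃ t : I, B t = Set.univ)
    (hinter : ∀ i j : I, (B i ∩ B j).Nonempty → ∃ k : I, B k = B i ∩ B j)
    (i j k : I) (hij : i < j) (hjk : j < k)
    (φ ψ χ : α → α)
    (hφ : PHom op B i j φ) (hψ : PHom op B j k ψ)
    (hχ : ∀ x : α, (x ∈ Bminus B i → χ x = ψ (φ x)) ∧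
      (x ∉ Bminus B i → χ x = x)) :
    PHom op B i k χ := by
  obtain ⟨hφ1, hφ2, hφ3, hφ4⟩ := hφ
  obtain ⟨hψ1, hψ2, hψ3, hψ4⟩ := hψ
  have hBij : B i ⊆ B j := (hord i j).1 hij.le
  refine ⟨?_, fun x hx => (hχ x).2 hx, ?_, ?_⟩
  · intro x hx
    rw [(hχ x).1 hx]
    exact hψ1 _ (hφ1 x hx)
  · intro x hx y hy
    have hxy : op x y ∈ Bminus B i := by
      constructor
      · exact (hiso i).1 x y hx.1 hy.1
      · intro hmem
        simp only [Set.mem_iUnion] at hmem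
        obtain ⟨m, hm, hmem⟩ := hmem
        by_cases hxm : x ∈ B m
        · exact hx.2 (Set.mem_iUnion.2 ⟨m, Set.mem_iUnion.2 ⟨hm, hxm⟩⟩)
        · exact ((hiso m).2 x y (Or.inl hxm)) hmem
    rw [(hχ _).1 hxy, (hχ x).1 hx, (hχ y).1 hy, hφ3 x hx y hy,
      hψ3 _ (hφ1 x hx) _ (hφ1 y hy)]
  · intro a b hab
    simp only [Set.mem_iUnion] at hab
    obtain ⟨l, hkl, habl⟩ := hab
    have hjl : j < l := lt_of_lt_of_le hjk hkl
    have habj : op a b ∉ B j := fun h =>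
      habl.2 (Set.mem_iUnion.2 ⟨j, Set.mem_iUnion.2 ⟨hjl, h⟩⟩)
    have hnot : ¬(a ∈ B j ∧ b ∈ B j) := fun ⟨ha, hb⟩ => habj ((hiso j).1 a b ha hb)
    have habk : op a b ∈ ⋃ l, ⋃ (_ : k ≤ l), Bminus B l :=
      Set.mem_iUnion.2 ⟨l, Set.mem_iUnion.2 ⟨hkl, habl⟩⟩
    have habj' : op a b ∈ ⋃ l, ⋃ (_ : j ≤ l), Bminus B l :=
      Set.mem_iUnion.2 ⟨l, Set.mem_iUnion.2 ⟨hjl.le, habl⟩⟩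
    have hout : ∀ x : α, x ∉ B j → χ x = x ∧ φ x = x ∧ ψ x = x := by
      intro x hx
      have hxi : x ∉ Bminus B i := fun h => hx (hBij h.1)
      have hxj : x ∉ Bminus B j := fun h => hx h.1
      exact ⟨(hχ x).2 hxi, hφ2 x hxi, hψ2 x hxj⟩
    by_cases haj : a ∈ B j
    · have hbj : b ∉ B j := fun h => hnot ⟨haj, h⟩
      obtain ⟨hb1, hb2, hb3⟩ := hout b hbj
      by_cases hai : a ∈ Bminus B i
      · rw [(hχ a).1 hai, hb1]
        have e1 : op a b = op (φ a) (φ b) := hφ4 a b habj'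
        rw [hb2] at e1
        have e2 : op (φ a) b = op (ψ (φ a)) (ψ b) := hψ4 _ _ (e1 ▸ habk)
        rw [hb3] at e2
        rw [e1, e2]
      · rw [(hχ a).2 hai, hb1]
    · obtain ⟨ha1, ha2, ha3⟩ := hout a haj
      by_cases hbi : b ∈ Bminus B i
      · rw [(hχ b).1 hbi, ha1]
        have e1 : op a b = op (φ a) (φ b) := hφ4 a b habj'
        rw [ha2] at e1
        have e2 : op a (φ b) = op (ψ a) (ψ (φ b)) := hψ4 _ _ (e1 ▸ habk)
        rw [ha3] at e2
        rw [e1, e2]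
      · rw [ha1, (hχ b).2 hbi]
end

section
/- Let A be a magma with a frame {B_i}_{i ∈ I} of isolated subsets (I ordered by i ≤ j iff B_i ⊆ B_j). Then for all a, b ∈ A and all i ∈ I: if a ∈ ⋃_{j ≥ i} B_j⁻ or b ∈ ⋃_{j ≥ i} B_j⁻, then a * b ∈ ⋃_{j ≥ i} B_j⁻, where B_j⁻ = B_j \ ⋃_{k < j} B_k. -/
theorem Isolated.mem_of_op_mem {A : Type*} {op : A → A → A} {B : Set A} (hB : Isolated op B)
    {a b : A} (h : op a b ∈ B) : a ∈ B ∧ b ∈ B := by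
  by_contra hab
  exact hB.2 a b (not_and_or.mp hab) h

theorem mem_Bminus_iff_minimal {I α : Type*} [Preorder I] {B : I → Set α} {a : α} {j : I} :
    a ∈ Bminus B j ↔ Minimal (a ∈ B ·) j := by
  simp [Bminus, minimal_iff_forall_lt]

section Frame

variable {I α : Type*} [PartialOrder I] {B : I → Set α}

theorem isLeast_of_minimal_mem (hle : ∀ i j, B i ⊆ B j → i ≤ j)
    (hinter : ∀ i j, (B i ∩ B j).Nonempty → ∃ k, B k = B i ∩ B j)
    {a : α} {j : I} (hj : Minimal (a ∈ B ·) j) : IsLeast {k | a ∈ B k} j := by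
  refine ⟨hj.prop, fun k hak => ?_⟩
  obtain ⟨m, hm⟩ := hinter j k ⟨a, hj.prop, hak⟩
  have ham : a ∈ B m := hm ▸ ⟨hj.prop, hak⟩
  have hmj : m = j := hj.eq_of_le ham (hle m j (hm ▸ Set.inter_subset_left))
  exact hle j k (hmj ▸ hm ▸ Set.inter_subset_right)

theorem mem_iUnion_Bminus_iff [Finite I] (hle : ∀ i j, B i ⊆ B j → i ≤ j)
    (hinter : ∀ i j, (B i ∩ B j).Nonempty → ∃ k, B k = B i ∩ B j)
    {a : α} (ha : ∃ t, a ∈ B t) (i : I) :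
    a ∈ ⋃ j, ⋃ (_ : i ≤ j), Bminus B j ↔ i ∈ lowerBounds {k | a ∈ B k} := by
  simp only [Set.mem_iUnion, exists_prop, mem_Bminus_iff_minimal]
  constructor
  · rintro ⟨j, hij, hj⟩
    exact fun k hk => hij.trans ((isLeast_of_minimal_mem hle hinter hj).2 hk)
  · intro hi
    obtain ⟨t, ht⟩ := ha
    obtain ⟨m, -, hm⟩ := Finite.exists_le_minimal (p := (a ∈ B ·)) ht
    exact ⟨m, hi hm.prop, hm⟩

end Frame

theorem stmt_14_general {I α : Type*} [PartialOrder I] [Finite I]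
    (op : α → α → α) (B : I → Set α)
    (hiso : ∀ i, Isolated op (B i))
    (hord : ∀ i j : I, i ≤ j ↔ B i ⊆ B j)
    (htop : ∃ t : I, B t = Set.univ)
    (hinter : ∀ i j : I, (B i ∩ B j).Nonempty → ∃ k : I, B k = B i ∩ B j) :
    ∀ (i : I) (a b : α),
      (a ∈ ⋃ j, ⋃ (_ : i ≤ j), Bminus B j ∨ b ∈ ⋃ j, ⋃ (_ : i ≤ j), Bminus B j) →
      op a b ∈ ⋃ j, ⋃ (_ : i ≤ j), Bminus B j := by
  have hle : ∀ i j, B i ⊆ B j → i ≤ j := fun i j => (hord i j).2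
  obtain ⟨t, ht⟩ := htop
  have hcover : ∀ x, ∃ t, x ∈ B t := fun x => ⟨t, ht ▸ Set.mem_univ x⟩
  intro i a b h
  simp only [mem_iUnion_Bminus_iff hle hinter (hcover _)] at h ⊢
  intro k hk
  obtain ⟨hak, hbk⟩ := (hiso k).mem_of_op_mem hk
  rcases h with ha | hb
  · exact ha hak
  · exact hb hbk

/-- in a frame of isolated subsets, if one of the arguments lies
in `⋃_{j ≥ i} B_j⁻`, then so does the result of the operation. -/
theorem stmt_14 {I α : Type*} [PartialOrder I] [Finite I]
    (op : α → α → α) (B : I → Set α)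
    (hiso : ∀ i, Isolated op (B i))
    (hord : ∀ i j : I, i ≤ j ↔ B i ⊆ B j)
    (hjoin : ∀ i j : I, ∃ k : I, B i ⊆ B k ∧ B j ⊆ B k ∧
      ∀ l : I, B i ⊆ B l → B j ⊆ B l → B k ⊆ B l)
    (htop : ∃ t : I, B t = Set.univ)
    (hinter : ∀ i j : I, (B i ∩ B j).Nonempty → ∃ k : I, B k = B i ∩ B j) :
    ∀ (i : I) (a b : α),
      (a ∈ ⋃ j, ⋃ (_ : i ≤ j), Bminus B j ∨ b ∈ ⋃ j, ⋃ (_ : i ≤ j), Bminus B j) →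
      op a b ∈ ⋃ j, ⋃ (_ : i ≤ j), Bminus B j :=
  stmt_14_general op B hiso hord htop hinter
end

section
/- Let A be a magma admitting a partition function f : A × A → A, i.e., f satisfies: f(f(a,b),c) = f(a,f(b,c)); f(a,a) = a; f(a,f(b,c)) = f(a,f(c,b)); f(a*b, c) = f(a,c) * f(b,c); f(c, a*b) = f(c, f(c,a) * f(c,b)); f(a*b, a) = a*b and f(a*b, b) = a*b; and f(a, a*a) = a. Then the binary relation a ~ b defined by f(a,b) = a and f(b,a) = b is an equivalence relation on A, and each equivalence class is closed under f in the sense that a ~ b implies f(a,c) ~ f(b,c) for all c. -/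
/-! The one-sided relation `f a b = a` is reflexive by idempotence and transitive by associativity,
so its symmetric part is an equivalence. It is stable under `· ↦ f · c` because
`f c (f y c) = f c y`, which lets `f (f x c) (f y c)` be reassociated to `f (f x y) c`. -/

def PartitionRel {A : Type*} (f : A → A → A) (a b : A) : Prop :=
  f a b = a ∧ f b a = b

section PartitionRel

variable {A : Type*} {f : A → A → A}

theorem absorb_trans (assoc : ∀ a b c, f (f a b) c = f a (f b c)) {a b c : A}
    (hab : f a b = a) (hbc : f b c = b) : f a c = a :=
  calc f a c = f (f a b) c := by rw [hab]
    _ = f a (f b c) := assoc a b c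
    _ = a := by rw [hbc, hab]

theorem partitionRel_equivalence (assoc : ∀ a b c, f (f a b) c = f a (f b c))
    (idem : ∀ a, f a a = a) : Equivalence (PartitionRel f) where
  refl a := ⟨idem a, idem a⟩
  symm h := ⟨h.2, h.1⟩
  trans hab hbc := ⟨absorb_trans assoc hab.1 hbc.1, absorb_trans assoc hbc.2 hab.2⟩

variable (assoc : ∀ a b c, f (f a b) c = f a (f b c)) (idem : ∀ a, f a a = a)
  (swap : ∀ a b c, f a (f b c) = f a (f c b))
include assoc idem swap

theorem absorb_map_right {x y : A} (c : A) (h : f x y = x) : f (f x c) (f y c) = f x c := by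
  have hc : f c (f y c) = f c y := by rw [swap, ← assoc, idem]
  calc f (f x c) (f y c) = f x (f c (f y c)) := assoc _ _ _
    _ = f x (f y c) := by rw [hc, swap]
    _ = f x c := by rw [← assoc, h]

theorem PartitionRel.map_right {a b : A} (c : A) (h : PartitionRel f a b) :
    PartitionRel f (f a c) (f b c) :=
  ⟨absorb_map_right assoc idem swap c h.1, absorb_map_right assoc idem swap c h.2⟩

end PartitionRel

theorem stmt_18_general {A : Type*} (f : A → A → A)
    (P1 : ∀ a b c : A, f (f a b) c = f a (f b c))
    (P2 : ∀ a : A, f a a = a)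
    (P3 : ∀ a b c : A, f a (f b c) = f a (f c b)) :
    Equivalence (fun a b : A => f a b = a ∧ f b a = b) ∧
    ∀ a b c : A, (f a b = a ∧ f b a = b) →
      (f (f a c) (f b c) = f a c ∧ f (f b c) (f a c) = f b c) :=
  ⟨partitionRel_equivalence P1 P2, fun _ _ c => PartitionRel.map_right P1 P2 P3 c⟩

/-- for a magma with a partition function `f`, the relation
`a ~ b ↔ f a b = a ∧ f b a = b` is an equivalence relation, and it is
compatible with `f`: `a ~ b` implies `f a c ~ f b c`. -/
theorem stmt_18 {A : Type*} (op : A → A → A) (f : A → A → A)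
    (P1 : ∀ a b c : A, f (f a b) c = f a (f b c))
    (P2 : ∀ a : A, f a a = a)
    (P3 : ∀ a b c : A, f a (f b c) = f a (f c b))
    (P4 : ∀ a b c : A, f (op a b) c = op (f a c) (f b c))
    (P5 : ∀ a b c : A, f c (op a b) = f c (op (f c a) (f c b)))
    (P6 : ∀ a b : A, f (op a b) a = op a b ∧ f (op a b) b = op a b)
    (P7 : ∀ a : A, f a (op a a) = a) :
    Equivalence (fun a b : A => f a b = a ∧ f b a = b) ∧
    ∀ a b c : A, (f a b = a ∧ f b a = b) →
      (f (f a c) (f b c) = f a c ∧ f (f b c) (f a c) = f b c) :=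
  stmt_18_general f P1 P2 P3
end
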